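/- Let $\mathbf{a}: \Theta \to \mathbb{C}^m$ be continuous on a compact set $\Theta$, $X \in \mathbb{C}^{m\times T}$, $\lambda > 0$. Suppose $\hat\theta_1,\dots,\hat\theta_n \in \Theta$ and $\hat S \in \mathbb{C}^{n\times T}$ with all rows nonzero satisfy, with $\hat N = X - \sum_i \mathbf{a}(\hat\theta_i)\hat S_i$ (where $\hat S_i$ is row $i$): (a) $\mathbf{a}(\hat\theta_i)^H \hat N = \lambda \|\hat S_i\|_2^{-1} \hat S_i$ for all $i$, and (b) $\|\mathbf{a}(\theta)^H \hat N\|_2 \leq \lambda$ for all $\theta \in \Theta$. Then for every finite set $\theta_1',\dots,\theta_p' \in \Theta$ and every $S' \in \mathbb{C}^{p\times T}$, $\tfrac{1}{2}\|X - \sum_k \mathbf{a}(\theta_k')S_k'\|_F^2 + \lambda\sum_k\|S_k'\|_2 \geq \tfrac{1}{2}\|\hat N\|_F^2 + \lambda\sum_i\|\hat S_i\|_2$. -/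

import Mathlib

/-!
The group-LASSO objective is convex, and the KKT conditions make the residual `N̂` a dual
certificate. For a competitor, write its residual as `N̂ + D` with `D = Â Ŝ - A' S'`. Then
`‖N̂ + D‖² ≥ ‖N̂‖² + 2 Re⟪N̂, D⟫`, and moving the adjoints onto `N̂` splits the cross term: by (a)
the candidate rows contribute exactly `λ ∑ ‖Ŝᵢ‖`, and by (b) with Cauchy–Schwarz the competitor
rows contribute at most `λ ∑ ‖S'ⱼ‖`.
-/

open Finset ComplexConjugate

section GroupLasso

variable {κ τ ι ι' : Type*} [Fintype κ] [Fintype τ] [Fintype ι] [Fintype ι']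

def lassoResidual (X : κ → τ → ℂ) (b : ι → κ → ℂ) (S : ι → τ → ℂ) (k : κ) (l : τ) : ℂ :=
  X k l - ∑ i, b i k * S i l

noncomputable def groupLassoObjective (X : κ → τ → ℂ) (lam : ℝ) (b : ι → κ → ℂ)
    (S : ι → τ → ℂ) : ℝ :=
  1 / 2 * ∑ k, ∑ l, ‖lassoResidual X b S k l‖ ^ 2 + lam * ∑ i, √(∑ l, ‖S i l‖ ^ 2)

lemma sum_re_mul_conj_le_sqrt_mul_sqrt (g s : τ → ℂ) :
    ∑ l, (g l * conj (s l)).re ≤ √(∑ l, ‖g l‖ ^ 2) * √(∑ l, ‖s l‖ ^ 2) :=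
  calc _ ≤ ∑ l, ‖g l‖ * ‖s l‖ := sum_le_sum fun l _ => by
          simpa only [norm_mul, Complex.norm_conj] using Complex.re_le_norm (g l * conj (s l))
    _ ≤ _ := Real.sum_mul_le_sqrt_mul_sqrt _ _ _

lemma sum_re_ofReal_div_mul_conj (lam : ℝ) (s : τ → ℂ) :
    ∑ l, (((lam / √(∑ l', ‖s l'‖ ^ 2) : ℝ) : ℂ) * s l * conj (s l)).re
      = lam * √(∑ l, ‖s l‖ ^ 2) := by
  set r := √(∑ l, ‖s l‖ ^ 2)
  have hr : r ^ 2 = ∑ l, ‖s l‖ ^ 2 := Real.sq_sqrt (by positivity)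
  simp_rw [mul_assoc, Complex.mul_conj, ← Complex.ofReal_mul, Complex.ofReal_re,
    ← mul_sum, Complex.normSq_eq_norm_sq, ← hr]
  rcases eq_or_ne r 0 with h | h
  · -- a zero row: both sides vanish, the left one because `lam / 0 = 0`
    simp [h]
  · field_simp

lemma sum_re_mul_conj_sum_mul (N : κ → τ → ℂ) (b : ι → κ → ℂ) (S : ι → τ → ℂ) :
    ∑ k, ∑ l, (N k l * conj (∑ i, b i k * S i l)).re
      = ∑ i, ∑ l, ((∑ k, conj (b i k) * N k l) * conj (S i l)).re := by
  simp only [← Complex.re_sum]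
  congr 1
  simp only [map_sum, map_mul, mul_sum, sum_mul]
  rw [sum_comm_cycle]
  refine sum_congr rfl fun i _ => ?_
  rw [sum_comm]
  exact sum_congr rfl fun _ _ => sum_congr rfl fun _ _ => by ring

theorem groupLassoObjective_le_of_kkt (X : κ → τ → ℂ) (lam : ℝ)
    (b : ι → κ → ℂ) (S : ι → τ → ℂ) (b' : ι' → κ → ℂ) (S' : ι' → τ → ℂ)
    (hstat : ∀ i l, ∑ k, conj (b i k) * lassoResidual X b S k l
      = (lam / √(∑ l', ‖S i l'‖ ^ 2) : ℝ) * S i l)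
    (hdual : ∀ j, √(∑ l, ‖∑ k, conj (b' j k) * lassoResidual X b S k l‖ ^ 2) ≤ lam) :
    groupLassoObjective X lam b S ≤ groupLassoObjective X lam b' S' := by
  set N := lassoResidual X b S
  set D : κ → τ → ℂ := fun k l => ∑ i, b i k * S i l - ∑ j, b' j k * S' j l
  have hsq : ∑ k, ∑ l, ‖N k l‖ ^ 2 + 2 * ∑ k, ∑ l, (N k l * conj (D k l)).re
      ≤ ∑ k, ∑ l, ‖lassoResidual X b' S' k l‖ ^ 2 := by
    simp only [mul_sum, ← sum_add_distrib]
    refine sum_le_sum fun k _ => sum_le_sum fun l _ => ?_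
    have hND : lassoResidual X b' S' k l = N k l + D k l := by
      simp only [N, D, lassoResidual]; ring
    rw [hND, Complex.sq_norm, Complex.sq_norm, Complex.normSq_add]
    linarith [Complex.normSq_nonneg (D k l)]
  have hcross : ∑ k, ∑ l, (N k l * conj (D k l)).re
      = ∑ i, ∑ l, ((∑ k, conj (b i k) * N k l) * conj (S i l)).re
        - ∑ j, ∑ l, ((∑ k, conj (b' j k) * N k l) * conj (S' j l)).re := by
    simp only [D, map_sub, mul_sub, Complex.sub_re, sum_sub_distrib, sum_re_mul_conj_sum_mul]
  have hsupport : ∑ i, ∑ l, ((∑ k, conj (b i k) * N k l) * conj (S i l)).re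
      = lam * ∑ i, √(∑ l, ‖S i l‖ ^ 2) := by
    simp only [hstat, sum_re_ofReal_div_mul_conj, mul_sum]
  have hcompetitor : ∑ j, ∑ l, ((∑ k, conj (b' j k) * N k l) * conj (S' j l)).re
      ≤ lam * ∑ j, √(∑ l, ‖S' j l‖ ^ 2) := by
    rw [mul_sum]
    exact sum_le_sum fun j _ => (sum_re_mul_conj_le_sqrt_mul_sqrt _ _).trans
      (mul_le_mul_of_nonneg_right (hdual j) (Real.sqrt_nonneg _))
  unfold groupLassoObjective
  linarith

end GroupLasso

theorem stmt_15_general (m n T : ℕ) (Θ : Set ℝ)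
    (a : ℝ → Fin m → ℂ)
    (X : Fin m → Fin T → ℂ) (lam : ℝ)
    (θhat : Fin n → ℝ)
    (Shat : Fin n → Fin T → ℂ)
    (Nhat : Fin m → Fin T → ℂ)
    (hN : ∀ k l, Nhat k l = X k l - ∑ i : Fin n, a (θhat i) k * Shat i l)
    (hKKTa : ∀ (i : Fin n) (l : Fin T),
      ∑ k : Fin m, (starRingEnd ℂ) (a (θhat i) k) * Nhat k l
        = (lam / Real.sqrt (∑ l' : Fin T, ‖Shat i l'‖ ^ 2) : ℝ) * Shat i l)
    (hKKTb : ∀ θ ∈ Θ, Real.sqrt (∑ l : Fin T,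
      ‖∑ k : Fin m, (starRingEnd ℂ) (a θ k) * Nhat k l‖ ^ 2) ≤ lam) :
    ∀ (p : ℕ) (θ' : Fin p → ℝ), (∀ j, θ' j ∈ Θ) → ∀ (S' : Fin p → Fin T → ℂ),
      (1 / 2) * (∑ k : Fin m, ∑ l : Fin T,
          ‖X k l - ∑ j : Fin p, a (θ' j) k * S' j l‖ ^ 2)
        + lam * ∑ j : Fin p, Real.sqrt (∑ l : Fin T, ‖S' j l‖ ^ 2)
      ≥ (1 / 2) * (∑ k : Fin m, ∑ l : Fin T, ‖Nhat k l‖ ^ 2)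
        + lam * ∑ i : Fin n, Real.sqrt (∑ l : Fin T, ‖Shat i l‖ ^ 2) := by
  intro p θ' hθ' S'
  obtain rfl : Nhat = lassoResidual X (fun i => a (θhat i)) Shat := funext₂ hN
  exact groupLassoObjective_le_of_kkt X lam _ Shat _ S' hKKTa fun j => hKKTb _ (hθ' j)

/-- Sufficiency direction of the CLASS optimality condition: the continuum KKT
conditions imply global optimality over all finite index sets and amplitudes. -/
theorem stmt_15 (m n T : ℕ) (Θ : Set ℝ) (hΘ : IsCompact Θ)
    (a : ℝ → Fin m → ℂ) (ha : ∀ k : Fin m, ContinuousOn (fun θ => a θ k) Θ)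
    (X : Fin m → Fin T → ℂ) (lam : ℝ) (hlam : 0 < lam)
    (θhat : Fin n → ℝ) (hθhat : ∀ i, θhat i ∈ Θ)
    (Shat : Fin n → Fin T → ℂ) (hrows : ∀ i, Shat i ≠ 0)
    (Nhat : Fin m → Fin T → ℂ)
    (hN : ∀ k l, Nhat k l = X k l - ∑ i : Fin n, a (θhat i) k * Shat i l)
    (hKKTa : ∀ (i : Fin n) (l : Fin T),
      ∑ k : Fin m, (starRingEnd ℂ) (a (θhat i) k) * Nhat k l
        = (lam / Real.sqrt (∑ l' : Fin T, ‖Shat i l'‖ ^ 2) : ℝ) * Shat i l)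
    (hKKTb : ∀ θ ∈ Θ, Real.sqrt (∑ l : Fin T,
      ‖∑ k : Fin m, (starRingEnd ℂ) (a θ k) * Nhat k l‖ ^ 2) ≤ lam) :
    ∀ (p : ℕ) (θ' : Fin p → ℝ), (∀ j, θ' j ∈ Θ) → ∀ (S' : Fin p → Fin T → ℂ),
      (1 / 2) * (∑ k : Fin m, ∑ l : Fin T,
          ‖X k l - ∑ j : Fin p, a (θ' j) k * S' j l‖ ^ 2)
        + lam * ∑ j : Fin p, Real.sqrt (∑ l : Fin T, ‖S' j l‖ ^ 2)
      ≥ (1 / 2) * (∑ k : Fin m, ∑ l : Fin T, ‖Nhat k l‖ ^ 2)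
        + lam * ∑ i : Fin n, Real.sqrt (∑ l : Fin T, ‖Shat i l‖ ^ 2) :=
  stmt_15_general m n T Θ a X lam θhat Shat Nhat hN hKKTa hKKTb
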